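/- For a number field F of degree f, the class number h_F satisfies h_F < e·|Disc(F)|^{1/2}·(1 + (1/2)·log|Disc(F)|)^f. -/

import Mathlib

/-!
Minkowski's bound, together with `(4/π)^{r₂} n!/nⁿ ≤ 1`, puts an integral ideal of norm at most
`Y = √|d_F|` in every ideal class, so `h_F` is at most the number of nonzero ideals of norm `≤ Y`.
Numbering the at most `n` primes above each rational prime `p` injects these ideals into
`n`-tuples of positive integers with product `≤ Y`: the `i`-th entry is the product of the
`N(𝔭)^{v_𝔭}` over the primes `𝔭` of number `i`. Distinct primes in one entry lie over distinct
rational primes, so the `p`-adic valuation of an entry recovers the exponent of the prime over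
`p` it contains. Finally, by induction on `n` and `∑_{m ≤ Y} 1/m ≤ 1 + log Y`, there are at most
`Y (1 + log Y)^n` such tuples.
-/

open Finset Real
open scoped Nat nonZeroDivisors

def tuplesProdLe (k B : ℕ) : Finset (Fin k → ℕ) :=
  {d ∈ Fintype.piFinset fun _ => Icc 1 B | ∏ i, d i ≤ B}

lemma mem_tuplesProdLe {k B : ℕ} {d : Fin k → ℕ} :
    d ∈ tuplesProdLe k B ↔ (∀ i, 0 < d i) ∧ ∏ i, d i ≤ B := by
  simp only [tuplesProdLe, mem_filter, Fintype.mem_piFinset, mem_Icc]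
  refine ⟨fun h => ⟨fun i => (h.1 i).1, h.2⟩, fun h => ⟨fun i => ⟨h.1 i, ?_⟩, h.2⟩⟩
  exact (single_le_prod' (fun j _ => h.1 j) (mem_univ i)).trans h.2

lemma card_tuplesProdLe_succ_le (k B : ℕ) :
    #(tuplesProdLe (k + 1) B) ≤ ∑ m ∈ Icc 1 B, #(tuplesProdLe k (B / m)) := by
  rw [← card_sigma]
  refine card_le_card_of_injOn (fun d => ⟨d 0, Fin.tail d⟩) (fun d hd => ?_) ?_
  · obtain ⟨hpos, hprod⟩ := mem_tuplesProdLe.mp hd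
    rw [Fin.prod_univ_succ] at hprod
    have h0 : d 0 ≤ B := (Nat.le_mul_of_pos_right _ (prod_pos fun i _ => hpos _)).trans hprod
    refine mem_sigma.mpr ⟨mem_Icc.mpr ⟨hpos 0, h0⟩, mem_tuplesProdLe.mpr ⟨fun i => hpos _, ?_⟩⟩
    rw [Nat.le_div_iff_mul_le (hpos 0), mul_comm]
    exact hprod
  · intro d _ e _ hde
    simp only [Sigma.mk.inj_iff] at hde
    rw [← Fin.cons_self_tail d, ← Fin.cons_self_tail e, hde.1, eq_of_heq hde.2]

lemma card_tuplesProdLe_floor_le (k : ℕ) {Y : ℝ} (hY : 1 ≤ Y) :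
    (#(tuplesProdLe k ⌊Y⌋₊) : ℝ) ≤ Y * (1 + log Y) ^ k := by
  induction k generalizing Y with
  | zero =>
    have : #(tuplesProdLe 0 ⌊Y⌋₊) ≤ 1 := card_le_one.mpr fun a _ b _ => Subsingleton.elim a b
    simpa using (Nat.cast_le_one.mpr this).trans hY
  | succ k ih =>
    have hlog : 0 ≤ log Y := log_nonneg hY
    have hterm : ∀ m ∈ Icc 1 ⌊Y⌋₊,
        (#(tuplesProdLe k (⌊Y⌋₊ / m)) : ℝ) ≤ (m : ℝ)⁻¹ * (Y * (1 + log Y) ^ k) := by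
      intro m hm
      obtain ⟨hm1, hmY⟩ := mem_Icc.mp hm
      have hm0 : (0 : ℝ) < m := by exact_mod_cast hm1
      have hYm : 1 ≤ Y / m :=
        (one_le_div hm0).mpr ((Nat.cast_le.mpr hmY).trans (Nat.floor_le (by linarith)))
      rw [← Nat.floor_div_natCast]
      calc (#(tuplesProdLe k ⌊Y / m⌋₊) : ℝ) ≤ Y / m * (1 + log (Y / m)) ^ k := ih hYm
        _ ≤ Y / m * (1 + log Y) ^ k := by
          gcongr
          · linarith [log_nonneg hYm]
          · exact div_le_self (by linarith) (by exact_mod_cast hm1)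
        _ = _ := by ring
    have hharm : ∑ m ∈ Icc 1 ⌊Y⌋₊, (m : ℝ)⁻¹ ≤ 1 + log Y := by
      simpa [harmonic_eq_sum_Icc] using harmonic_floor_le_one_add_log Y hY
    calc (#(tuplesProdLe (k + 1) ⌊Y⌋₊) : ℝ)
        ≤ ∑ m ∈ Icc 1 ⌊Y⌋₊, (#(tuplesProdLe k (⌊Y⌋₊ / m)) : ℝ) := by
          exact_mod_cast card_tuplesProdLe_succ_le k ⌊Y⌋₊
      _ ≤ ∑ m ∈ Icc 1 ⌊Y⌋₊, (m : ℝ)⁻¹ * (Y * (1 + log Y) ^ k) := sum_le_sum hterm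
      _ = (∑ m ∈ Icc 1 ⌊Y⌋₊, (m : ℝ)⁻¹) * (Y * (1 + log Y) ^ k) := (sum_mul ..).symm
      _ ≤ (1 + log Y) * (Y * (1 + log Y) ^ k) := by gcongr
      _ = Y * (1 + log Y) ^ (k + 1) := by ring


section RankInFinset

variable {α : Type*} (r : α → α → Prop) [DecidableRel r] (s : Finset α)

lemma card_filter_rel_lt_card [Std.Irrefl r] {x : α} (hx : x ∈ s) : #{y ∈ s | r y x} < #s :=
  card_lt_card (filter_ssubset.mpr ⟨x, hx, irrefl x⟩)

lemma injOn_card_filter_rel [IsStrictTotalOrder α r] :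
    Set.InjOn (fun x => #{y ∈ s | r y x}) s := by
  have hlt : ∀ x ∈ s, ∀ y ∈ s, r x y → #{z ∈ s | r z x} < #{z ∈ s | r z y} := by
    refine fun x hx y _ hxy =>
      card_lt_card ⟨monotone_filter_right s fun z _ hz => trans_of r hz hxy, ?_⟩
    exact fun h => irrefl x (mem_filter.mp (h (mem_filter.mpr ⟨hx, hxy⟩))).2
  intro x hx y hy h
  rcases trichotomous_of r x y with hxy | rfl | hyx
  · exact absurd h (hlt x hx y hy hxy).ne
  · rfl
  · exact absurd h (hlt y hy x hx hyx).ne'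

end RankInFinset

open Ideal UniqueFactorizationMonoid Module
open scoped Classical

noncomputable section NormTuple

variable {S : Type*} [CommRing S] [IsDedekindDomain S] [Module.Free ℤ S]

lemma minFac_absNorm_prime {P : Ideal S} (hP : Prime P) : (absNorm P).minFac.Prime :=
  Nat.minFac_prime fun h => (isPrime_of_prime hP).ne_top (absNorm_eq_one_iff.mp h)

variable [Module.Finite ℤ S]

def primesOverNat (p : ℕ) : Finset (Ideal S) := (normalizedFactors (span {(p : S)})).toFinset

lemma span_natCast_ne_bot {p : ℕ} (hp : p ≠ 0) : span {(p : S)} ≠ ⊥ := by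
  intro h
  have hN := absNorm_span_natCast (S := S) p
  rw [h, absNorm_bot] at hN
  exact pow_ne_zero _ hp hN.symm

lemma mem_primesOverNat {p : ℕ} (hp : p ≠ 0) {P : Ideal S} :
    P ∈ primesOverNat p ↔ P.IsPrime ∧ (p : S) ∈ P := by
  rw [primesOverNat, Multiset.mem_toFinset,
    Ideal.mem_normalizedFactors_iff (span_natCast_ne_bot hp), span_singleton_le_iff_mem]

lemma absNorm_eq_pow_of_mem_primesOverNat {p : ℕ} (hp : p.Prime) {P : Ideal S}
    (hP : P ∈ primesOverNat p) : ∃ k, 0 < k ∧ absNorm P = p ^ k := by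
  obtain ⟨hPprime, hpP⟩ := (mem_primesOverNat hp.ne_zero).mp hP
  obtain ⟨k, -, hN⟩ := (Nat.dvd_prime_pow hp).mp (absNorm_span_natCast (S := S) p ▸
    absNorm_dvd_absNorm_of_le ((span_singleton_le_iff_mem _).mpr hpP))
  refine ⟨k, Nat.pos_of_ne_zero ?_, hN⟩
  rintro rfl
  exact hPprime.ne_top (absNorm_eq_one_iff.mp hN)

lemma card_primesOverNat_le {p : ℕ} (hp : p.Prime) :
    #(primesOverNat (S := S) p) ≤ finrank ℤ S := by
  have hspan := span_natCast_ne_bot (S := S) hp.ne_zero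
  set s := normalizedFactors (span {(p : S)})
  have hle : ∀ N ∈ s.map absNorm, p ≤ N := by
    simp only [Multiset.mem_map]
    rintro _ ⟨P, hP, rfl⟩
    obtain ⟨k, hk, hN⟩ := absNorm_eq_pow_of_mem_primesOverNat hp (Multiset.mem_toFinset.mpr hP)
    exact hN ▸ Nat.le_self_pow hk.ne' p
  have hpow : p ^ Multiset.card s ≤ p ^ finrank ℤ S :=
    calc p ^ Multiset.card s = p ^ Multiset.card (s.map absNorm) := by rw [Multiset.card_map]
      _ ≤ (s.map absNorm).prod := Multiset.pow_card_le_prod hle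
      _ = p ^ finrank ℤ S := by
        rw [← map_multiset_prod, Ideal.prod_normalizedFactors_eq_self hspan, absNorm_span_natCast]
  exact (Multiset.toFinset_card_le s).trans ((Nat.pow_le_pow_iff_right hp.one_lt).mp hpow)

lemma minFac_absNorm_of_mem_primesOverNat {p : ℕ} (hp : p.Prime) {P : Ideal S}
    (hP : P ∈ primesOverNat p) : (absNorm P).minFac = p := by
  obtain ⟨k, hk, hN⟩ := absNorm_eq_pow_of_mem_primesOverNat hp hP
  rw [hN, hp.pow_minFac hk.ne']

lemma mem_primesOverNat_minFac_absNorm {P : Ideal S} (hP : Prime P) :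
    P ∈ primesOverNat (absNorm P).minFac := by
  have := (isPrime_of_prime hP).isMaximal hP.ne_zero
  obtain ⟨p, k, hk, hpP, hp, hN⟩ := exists_prime_and_absNorm_eq_pow P
  rw [hN, hp.pow_minFac hk.ne']
  exact (mem_primesOverNat hp.ne_zero).mpr ⟨inferInstance, hpP⟩

lemma minFac_absNorm_eq_of_dvd {P : Ideal S} (hP : Prime P) {p : ℕ} (hp : p.Prime)
    (h : p ∣ absNorm P) : (absNorm P).minFac = p := by
  have hP' := mem_primesOverNat_minFac_absNorm hP
  have hq := minFac_absNorm_prime hP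
  obtain ⟨k, -, hN⟩ := absNorm_eq_pow_of_mem_primesOverNat hq hP'
  exact ((Nat.prime_dvd_prime_iff_eq hp hq).mp (hp.dvd_of_dvd_pow (hN ▸ h))).symm

/-- `(absNorm P).minFac` is the rational prime below `P`. -/
def primeIndex (P : Ideal S) : ℕ :=
  #{Q ∈ primesOverNat (absNorm P).minFac | WellOrderingRel Q P}

lemma primeIndex_lt {P : Ideal S} (hP : Prime P) : primeIndex P < finrank ℤ S :=
  (card_filter_rel_lt_card WellOrderingRel _ (mem_primesOverNat_minFac_absNorm hP)).trans_le
    (card_primesOverNat_le (minFac_absNorm_prime hP))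

lemma eq_of_primeIndex_eq {p : ℕ} (hp : p.Prime) {P Q : Ideal S} (hP : P ∈ primesOverNat p)
    (hQ : Q ∈ primesOverNat p) (h : primeIndex P = primeIndex Q) : P = Q := by
  refine injOn_card_filter_rel WellOrderingRel _ hP hQ ?_
  simpa only [primeIndex, minFac_absNorm_of_mem_primesOverNat hp hP,
    minFac_absNorm_of_mem_primesOverNat hp hQ] using h

def normComponent (I : Ideal S) (i : ℕ) : ℕ :=
  ∏ P ∈ (normalizedFactors I).toFinset with primeIndex P = i,
    absNorm P ^ (normalizedFactors I).count P

lemma factorization_normComponent_primeIndex (I : Ideal S) {P : Ideal S} (hP : Prime P) :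
    (normComponent I (primeIndex P)).factorization (absNorm P).minFac =
      (normalizedFactors I).count P * (absNorm P).factorization (absNorm P).minFac := by
  set p := (absNorm P).minFac
  have hp : p.Prime := minFac_absNorm_prime hP
  have hfactor : ∀ Q ∈ normalizedFactors I, Prime Q := fun Q => prime_of_normalized_factor Q
  have hne : ∀ Q ∈ normalizedFactors I, absNorm Q ≠ 0 := fun Q hQ =>
    absNorm_ne_zero_iff_mem_nonZeroDivisors.mpr
      (mem_nonZeroDivisors_of_ne_zero (hfactor Q hQ).ne_zero)
  rw [normComponent, Nat.factorization_prod fun Q hQ => pow_ne_zero _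
    (hne Q (Multiset.mem_toFinset.mp (mem_filter.mp hQ).1)), Finsupp.finsetSum_apply]
  simp_rw [Nat.factorization_pow, Finsupp.smul_apply, smul_eq_mul]
  refine sum_eq_single P (fun Q hQ hQP => ?_) fun hP' => ?_
  · obtain ⟨hQI, hQidx⟩ := mem_filter.mp hQ
    have hQprime := hfactor Q (Multiset.mem_toFinset.mp hQI)
    refine mul_eq_zero_of_right _ (Nat.factorization_eq_zero_of_not_dvd fun hdvd => hQP ?_)
    have hQp : Q ∈ primesOverNat p :=
      minFac_absNorm_eq_of_dvd hQprime hp hdvd ▸ mem_primesOverNat_minFac_absNorm hQprime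
    exact eq_of_primeIndex_eq hp hQp (mem_primesOverNat_minFac_absNorm hP) hQidx
  · rw [Multiset.count_eq_zero_of_notMem fun hPI =>
      hP' (mem_filter.mpr ⟨Multiset.mem_toFinset.mpr hPI, rfl⟩), zero_mul]


def normTuple (I : Ideal S) (i : Fin (finrank ℤ S)) : ℕ := normComponent I i

lemma normTuple_pos (I : Ideal S) (i : Fin (finrank ℤ S)) : 0 < normTuple I i :=
  prod_pos fun P hP => pow_pos (Nat.pos_of_ne_zero (absNorm_ne_zero_iff_mem_nonZeroDivisors.mpr
    (mem_nonZeroDivisors_of_ne_zero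
      (prime_of_normalized_factor P (Multiset.mem_toFinset.mp (mem_filter.mp hP).1)).ne_zero))) _

lemma prod_normTuple {I : Ideal S} (hI : I ≠ ⊥) : ∏ i, normTuple I i = absNorm I := by
  have hmaps : ∀ P ∈ (normalizedFactors I).toFinset, primeIndex P ∈ range (finrank ℤ S) :=
    fun P hP => mem_range.mpr
      (primeIndex_lt (prime_of_normalized_factor P (Multiset.mem_toFinset.mp hP)))
  simp only [normTuple]
  rw [Fin.prod_univ_eq_prod_range (normComponent I)]
  simp only [normComponent]
  rw [prod_fiberwise_of_maps_to hmaps, ← prod_multiset_map_count, ← map_multiset_prod,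
    Ideal.prod_normalizedFactors_eq_self hI]

lemma normTuple_injOn {I J : Ideal S} (hI : I ≠ ⊥) (hJ : J ≠ ⊥)
    (h : normTuple I = normTuple J) : I = J := by
  rw [← Ideal.prod_normalizedFactors_eq_self hI, ← Ideal.prod_normalizedFactors_eq_self hJ]
  congr 1
  ext Q
  by_cases hQ : Prime Q
  · have hcomp : normComponent I (primeIndex Q) = normComponent J (primeIndex Q) :=
      congrFun h ⟨_, primeIndex_lt hQ⟩
    have hpos : 0 < (absNorm Q).factorization (absNorm Q).minFac :=
      (minFac_absNorm_prime hQ).factorization_pos_of_dvd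
        (absNorm_ne_zero_iff_mem_nonZeroDivisors.mpr (mem_nonZeroDivisors_of_ne_zero hQ.ne_zero))
        (Nat.minFac_dvd _)
    have := factorization_normComponent_primeIndex I hQ
    rw [hcomp, factorization_normComponent_primeIndex J hQ] at this
    exact (Nat.eq_of_mul_eq_mul_right hpos this).symm
  · rw [Multiset.count_eq_zero_of_notMem (mt (prime_of_normalized_factor Q) hQ),
      Multiset.count_eq_zero_of_notMem (mt (prime_of_normalized_factor Q) hQ)]

lemma normTuple_mem_tuplesProdLe {I : Ideal S} (hI : I ≠ ⊥) {B : ℕ} (hB : absNorm I ≤ B) :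
    normTuple I ∈ tuplesProdLe (finrank ℤ S) B :=
  mem_tuplesProdLe.mpr ⟨normTuple_pos I, (prod_normTuple hI).trans_le hB⟩

end NormTuple

lemma two_mul_pow_le_add_one_pow {m : ℕ} (hm : m ≠ 0) : 2 * m ^ m ≤ (m + 1) ^ m := by
  have hm0 : (0 : ℝ) < m := by exact_mod_cast Nat.pos_of_ne_zero hm
  have hbernoulli : (2 : ℝ) ≤ (1 + 1 / m) ^ m := by
    have := one_add_mul_le_pow (show (-2 : ℝ) ≤ 1 / m by linarith [one_div_pos.mpr hm0]) m
    rwa [mul_one_div_cancel hm0.ne', one_add_one_eq_two] at this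
  have : (2 : ℝ) * m ^ m ≤ (m + 1) ^ m :=
    calc (2 : ℝ) * m ^ m ≤ (1 + 1 / m) ^ m * m ^ m := by gcongr
      _ = (m + 1) ^ m := by rw [← mul_pow, add_mul, one_div_mul_cancel hm0.ne', one_mul, add_comm]
  exact_mod_cast this

lemma two_pow_pred_mul_factorial_le_pow (n : ℕ) : 2 ^ (n - 1) * n ! ≤ n ^ n := by
  induction n with
  | zero => simp
  | succ n ih =>
    rcases Nat.eq_zero_or_pos n with rfl | hn
    · simp
    calc 2 ^ n * (n + 1)! = (n + 1) * (2 * (2 ^ (n - 1) * n !)) := by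
          rw [← mul_assoc 2, ← pow_succ', Nat.sub_add_cancel hn, Nat.factorial_succ]; ring
      _ ≤ (n + 1) * (2 * n ^ n) := by gcongr
      _ ≤ (n + 1) * (n + 1) ^ n := by gcongr; exact two_mul_pow_le_add_one_pow hn.ne'
      _ = (n + 1) ^ (n + 1) := (pow_succ' _ _).symm

lemma four_div_pi_pow_mul_factorial_div_pow_le_one {r n : ℕ} (h : 2 * r ≤ n) :
    (4 / π) ^ r * (n ! / n ^ n : ℝ) ≤ 1 := by
  rcases Nat.eq_zero_or_pos n with rfl | hn
  · obtain rfl : r = 0 := by omega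
    simp
  have h4 : 4 / π ≤ 2 := by
    rw [div_le_iff₀ pi_pos]; linarith [pi_gt_three]
  calc (4 / π) ^ r * (n ! / n ^ n : ℝ) ≤ 2 ^ (n - 1) * (n ! / n ^ n : ℝ) := by
        gcongr
        exact (pow_le_pow_left₀ (by positivity) h4 r).trans
          (pow_le_pow_right₀ one_le_two (by omega))
    _ = ((2 ^ (n - 1) * n ! : ℕ) : ℝ) / (n ^ n : ℕ) := by push_cast; ring
    _ ≤ 1 := div_le_one_of_le₀ (by exact_mod_cast two_pow_pred_mul_factorial_le_pow n)
        (by positivity)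

open NumberField InfinitePlace

lemma exists_ideal_in_class_of_absNorm_le_sqrt {K : Type*} [Field K] [NumberField K]
    (C : ClassGroup (𝓞 K)) :
    ∃ I : (Ideal (𝓞 K))⁰, ClassGroup.mk0 I = C ∧
      (absNorm (I : Ideal (𝓞 K)) : ℝ) ≤ √|(discr K : ℝ)| := by
  obtain ⟨I, hI, hN⟩ := exists_ideal_in_class_of_norm_le C
  refine ⟨I, hI, hN.trans ?_⟩
  rw [← mul_assoc]
  refine mul_le_of_le_one_left (sqrt_nonneg _) (four_div_pi_pow_mul_factorial_div_pow_le_one ?_)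
  have := card_add_two_mul_card_eq_rank K
  omega

theorem classNumber_le_card_tuplesProdLe (K : Type*) [Field K] [NumberField K] :
    classNumber K ≤ #(tuplesProdLe (finrank ℚ K) ⌊√|(discr K : ℝ)|⌋₊) := by
  choose rep hrep hnorm using exists_ideal_in_class_of_absNorm_le_sqrt (K := K)
  have hne : ∀ C, (rep C : Ideal (𝓞 K)) ≠ ⊥ := fun C => nonZeroDivisors.coe_ne_zero (rep C)
  rw [← RingOfIntegers.rank, classNumber, ← card_univ]
  refine card_le_card_of_injOn (fun C => normTuple (rep C : Ideal (𝓞 K)))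
    (fun C _ => normTuple_mem_tuplesProdLe (hne C) (Nat.le_floor (hnorm C))) fun C _ C' _ h => ?_
  rw [← hrep C, ← hrep C', Subtype.ext (normTuple_injOn (hne C) (hne C') h)]

/-- For a number field `F` of degree `f`, the class number satisfies
`h_F < e·|Disc(F)|^{1/2}·(1 + (1/2)·log|Disc(F)|)^f`. -/
theorem stmt_1 (F : Type*) [Field F] [NumberField F] (f : ℕ)
    (hf : Module.finrank ℚ F = f) :
    (classNumber F : ℝ) <
      Real.exp 1 * (|(discr F : ℝ)|) ^ ((1 : ℝ) / 2) *
        (1 + (1 / 2 : ℝ) * Real.log |(discr F : ℝ)|) ^ f := by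
  subst hf
  have hD : 1 ≤ √|(discr F : ℝ)| :=
    one_le_sqrt.mpr (by rw [← Int.cast_abs]; exact_mod_cast Int.one_le_abs (discr_ne_zero F))
  have hlog : 0 < 1 + log √|(discr F : ℝ)| := by linarith [log_nonneg hD]
  calc (classNumber F : ℝ) ≤ #(tuplesProdLe (finrank ℚ F) ⌊√|(discr F : ℝ)|⌋₊) := by
        exact_mod_cast classNumber_le_card_tuplesProdLe F
    _ ≤ √|(discr F : ℝ)| * (1 + log √|(discr F : ℝ)|) ^ finrank ℚ F :=
        card_tuplesProdLe_floor_le _ hD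
    _ < exp 1 * (√|(discr F : ℝ)| * (1 + log √|(discr F : ℝ)|) ^ finrank ℚ F) :=
        lt_mul_of_one_lt_left (by positivity) (one_lt_exp_iff.mpr one_pos)
    _ = exp 1 * |(discr F : ℝ)| ^ ((1 : ℝ) / 2) *
          (1 + 1 / 2 * log |(discr F : ℝ)|) ^ finrank ℚ F := by
        rw [log_sqrt (abs_nonneg _), sqrt_eq_rpow]; ring
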